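/- Three-level example where Condition DS holds but Condition ES fails: let V = diag(0,1,2), L_1 = E_{12} (matrix with 1 in entry (1,2)), L_2 = E_{23} + E_{32}. Then G(V) := Σ_k (L_k† V L_k − (1/2)L_k† L_k V − (1/2)V L_k† L_k) = diag(0,0,−1) ≤ 0 and D(V) := Σ_k [L_k†,V][V,L_k] = diag(0,2,1) ≥ (1/2)V, but there is no c > 0 with G(V) ≤ −cV. -/

import Mathlib

open Matrix ComplexOrder

/-!
For a diagonal `V = diag(a, b, c)`, the jump operator `L₁ = E₁₂` contributes `(a - b) E₂₂` to
`G(V)` and `(a - b)² E₂₂` to `D(V)`, and each half of `L₂ = E₂₃ + E₃₂` contributes likewise, the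
cross terms vanishing. Hence `G(V) = diag(0, a - 2b + c, b - c)` and
`D(V) = diag(0, (a - b)² + (b - c)², (b - c)²)`. Since `V = diag(0, 1, 2)` is linear in the level,
the middle entry of `G(V)` is a vanishing second difference, while the middle entry of `V` is
positive; so no `-cV` with `c > 0` dominates `G(V)`, although `D(V) - V/2 = diag(0, 3/2, 0) ≥ 0`.
-/

lemma Matrix.not_posSemidef_neg_smul_sub {n R : Type*} [CommRing R] [PartialOrder R] [StarRing R]
    [IsStrictOrderedRing R] {V G : Matrix n n R} {i : n} (hG : G i i = 0) (hV : 0 < V i i)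
    {c : R} (hc : 0 < c) : ¬ (-c • V - G).PosSemidef := fun h => by
  have h_diag := h.diag_nonneg (i := i)
  rw [sub_apply, smul_apply, hG, sub_zero, smul_eq_mul, neg_mul, neg_nonneg] at h_diag
  exact (mul_pos hc hV).not_ge h_diag

section ThreeLevel

variable {a b c : ℂ} {V L₁ L₂ : Matrix (Fin 3) (Fin 3) ℂ}

theorem threeLevel_lindblad_eq (hV : V = !![a, 0, 0; 0, b, 0; 0, 0, c])
    (hL₁ : L₁ = !![0, 1, 0; 0, 0, 0; 0, 0, 0]) (hL₂ : L₂ = !![0, 0, 0; 0, 0, 1; 0, 1, 0]) :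
    (L₁ᴴ * V * L₁ - ((1 : ℂ)/2) • (L₁ᴴ * L₁ * V) - ((1 : ℂ)/2) • (V * (L₁ᴴ * L₁)))
      + (L₂ᴴ * V * L₂ - ((1 : ℂ)/2) • (L₂ᴴ * L₂ * V) - ((1 : ℂ)/2) • (V * (L₂ᴴ * L₂)))
      = !![0, 0, 0; 0, a - 2 * b + c, 0; 0, 0, b - c] := by
  subst hV hL₁ hL₂
  ext i j
  fin_cases i <;> fin_cases j <;> simp [mul_apply, Fin.sum_univ_succ, vecMul, dotProduct] <;> ring

theorem threeLevel_commutator_eq (hV : V = !![a, 0, 0; 0, b, 0; 0, 0, c])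
    (hL₁ : L₁ = !![0, 1, 0; 0, 0, 0; 0, 0, 0]) (hL₂ : L₂ = !![0, 0, 0; 0, 0, 1; 0, 1, 0]) :
    (L₁ᴴ * V - V * L₁ᴴ) * (V * L₁ - L₁ * V) + (L₂ᴴ * V - V * L₂ᴴ) * (V * L₂ - L₂ * V)
      = !![0, 0, 0; 0, (a - b) ^ 2 + (b - c) ^ 2, 0; 0, 0, (b - c) ^ 2] := by
  subst hV hL₁ hL₂
  ext i j
  fin_cases i <;> fin_cases j <;> simp [mul_apply, Fin.sum_univ_succ, vecMul, dotProduct] <;> ring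

end ThreeLevel

theorem three_level_DS_not_ES
    (V L₁ L₂ : Matrix (Fin 3) (Fin 3) ℂ)
    (hV : V = !![0, 0, 0; 0, 1, 0; 0, 0, 2])
    (hL₁ : L₁ = !![0, 1, 0; 0, 0, 0; 0, 0, 0])
    (hL₂ : L₂ = !![0, 0, 0; 0, 0, 1; 0, 1, 0])
    (G D : Matrix (Fin 3) (Fin 3) ℂ)
    (hG : G = (L₁ᴴ * V * L₁ - ((1 : ℂ)/2) • (L₁ᴴ * L₁ * V) - ((1 : ℂ)/2) • (V * (L₁ᴴ * L₁)))
            + (L₂ᴴ * V * L₂ - ((1 : ℂ)/2) • (L₂ᴴ * L₂ * V) - ((1 : ℂ)/2) • (V * (L₂ᴴ * L₂))))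
    (hD : D = (L₁ᴴ * V - V * L₁ᴴ) * (V * L₁ - L₁ * V)
            + (L₂ᴴ * V - V * L₂ᴴ) * (V * L₂ - L₂ * V)) :
    G = !![0, 0, 0; 0, 0, 0; 0, 0, -1] ∧ (-G).PosSemidef ∧
      D = !![0, 0, 0; 0, 2, 0; 0, 0, 1] ∧ (D - ((1 : ℝ)/2 : ℂ) • V).PosSemidef ∧
      ¬ ∃ c : ℝ, 0 < c ∧ ((-(c : ℂ)) • V - G).PosSemidef := by
  have hG' : G = !![0, 0, 0; 0, 0, 0; 0, 0, -1] := by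
    rw [hG, threeLevel_lindblad_eq hV hL₁ hL₂]
    norm_num
  have hD' : D = !![0, 0, 0; 0, 2, 0; 0, 0, 1] := by
    rw [hD, threeLevel_commutator_eq hV hL₁ hL₂]
    norm_num
  refine ⟨hG', ?_, hD', ?_, ?_⟩
  · rw [hG', ← diagonal_vec3, diagonal_neg, posSemidef_diagonal_iff]
    simp [Fin.forall_fin_succ]
  · rw [hD', hV, ← diagonal_vec3, ← diagonal_vec3, ← diagonal_smul, diagonal_sub,
      posSemidef_diagonal_iff]
    norm_num [Fin.forall_fin_succ, Complex.le_def]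
  · rintro ⟨c, hc, hcV⟩
    exact not_posSemidef_neg_smul_sub (i := 1) (by simp [hG']) (by simp [hV])
      (by positivity) hcV
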